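/- Let V > 0, D ∈ ℝ, and W ∈ ℝ, and define f(γ) = (1−γ)² V + (γ − W)² D² for γ ∈ ℝ. Then f attains its minimum over ℝ uniquely at γ* = (V + W D²)/(V + D²). Moreover, if 0 ≤ W ≤ 1 then W ≤ γ* ≤ 1. -/
import Mathlib


/-- The MSE function `f(γ) = (1−γ)² V + (γ−W)² D²` (with `V > 0`) attains its minimum
over `ℝ` uniquely at `γ* = (V + W D²)/(V + D²)`; moreover `W ≤ γ* ≤ 1` whenever
`0 ≤ W ≤ 1`. -/
theorem stmt_15 (V D W : ℝ) (hV : 0 < V) :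
    let f : ℝ → ℝ := fun γ => (1 - γ) ^ 2 * V + (γ - W) ^ 2 * D ^ 2
    let γs : ℝ := (V + W * D ^ 2) / (V + D ^ 2)
    (∀ γ : ℝ, f γs ≤ f γ) ∧
      (∀ γ : ℝ, f γ = f γs → γ = γs) ∧
      (0 ≤ W → W ≤ 1 → W ≤ γs ∧ γs ≤ 1) := by
  intro f γs
  have hVD : 0 < V + D ^ 2 := by positivity
  have hne : V + D ^ 2 ≠ 0 := ne_of_gt hVD
  have key : ∀ γ : ℝ, f γ - f γs = (V + D ^ 2) * (γ - γs) ^ 2 := by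
    intro γ
    simp only [f, γs]
    field_simp
    ring
  refine ⟨?_, ?_, ?_⟩
  · intro γ
    have := key γ
    nlinarith [sq_nonneg (γ - γs)]
  · intro γ h
    have h2 := key γ
    rw [h, sub_self] at h2
    have := (mul_eq_zero.mp h2.symm).resolve_left hne
    have := pow_eq_zero_iff (n := 2) (by norm_num) |>.mp this
    linarith [sub_eq_zero.mp this]
  · intro h0 h1
    constructor
    · rw [le_div_iff₀ hVD]
      nlinarith [sq_nonneg D]
    · rw [div_le_one hVD]
      nlinarith [sq_nonneg D]
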